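/- For real β ≥ 0, the spectral radii of the bounded operators L↓_β and L↑_β on H^∞(Π) are both equal to 1: r(L↓_β) = r(L↑_β) = 1. -/

import Mathlib

open Complex BoundedContinuousFunction
open scoped ENNReal

/-- The open right half-plane `Π = {z : ℂ | 0 < Re z}`. -/
def RHP : Set ℂ := {z : ℂ | 0 < z.re}

/-- Extension of a bounded continuous function on `Π` to `ℂ` (by zero off `Π`). -/
noncomputable def extFun (f : ↥RHP →ᵇ ℂ) : ℂ → ℂ :=
  fun z => if h : 0 < z.re then f ⟨z, h⟩ else 0

/-- `H^∞(Π)`: the space of bounded holomorphic functions on `Π`, realised as the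
submodule of the Banach space of bounded continuous functions on `Π` (with the
supremum norm) consisting of the holomorphic ones. -/
noncomputable def Hinf : Submodule ℂ (↥RHP →ᵇ ℂ) where
  carrier := {f | DifferentiableOn ℂ (extFun f) RHP}
  add_mem' := by
    intro f g hf hg
    refine (DifferentiableOn.add hf hg).congr (fun z hz => ?_)
    have hz' : 0 < z.re := hz
    simp only [extFun]
    simp [extFun, hz']
  zero_mem' := by
    refine (differentiableOn_const 0).congr (fun z hz => ?_)
    have hz' : 0 < z.re := hz
    simp only [extFun]
    rw [dif_pos hz']
    rfl
  smul_mem' := by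
    intro c f hf
    refine (hf.const_smul c).congr (fun z hz => ?_)
    have hz' : 0 < z.re := hz
    simp only [extFun]
    simp [extFun, hz']

lemma mem_shift (z : ↥RHP) : (1 : ℂ) + z.1 ∈ RHP := by
  have hz := z.2
  simp only [RHP, Set.mem_setOf_eq, Complex.add_re, Complex.one_re] at *
  linarith

lemma mem_div (z : ↥RHP) : z.1 / (1 + z.1) ∈ RHP := by
  have hz := z.2
  simp only [RHP, Set.mem_setOf_eq] at hz ⊢
  have hw : (1 + z.1) ≠ 0 := by
    intro h
    have h2 : (1 + z.1).re = 0 := by rw [h]; simp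
    simp only [Complex.add_re, Complex.one_re] at h2
    linarith
  have hns : 0 < Complex.normSq (1 + z.1) := Complex.normSq_pos.mpr hw
  rw [Complex.div_re]
  have h1 : 0 < z.1.re * (1 + z.1).re := by
    simp only [Complex.add_re, Complex.one_re]
    nlinarith
  have h2 : 0 ≤ z.1.im * (1 + z.1).im := by
    simp only [Complex.add_im, Complex.one_im, zero_add]
    nlinarith [sq_nonneg z.1.im]
  have := div_pos h1 hns
  have := div_nonneg h2 hns.le
  linarith

/-- Pointwise characterisation of the transfer operator
`(L↑_β f)(z) = (1+z)^(-2β) f(z/(1+z))` on `H^∞(Π)` (principal branch power). -/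
def IsLup (β : ℂ) (T : ↥Hinf →L[ℂ] ↥Hinf) : Prop :=
  ∀ f : ↥Hinf, ∀ z : ↥RHP,
    (T f).1 z = (1 + z.1) ^ (-(2 * β)) * f.1 ⟨z.1 / (1 + z.1), mem_div z⟩

/-- Pointwise characterisation of the transfer operator `(L↓ f)(z) = f(1+z)` on `H^∞(Π)`. -/
def IsLdn (T : ↥Hinf →L[ℂ] ↥Hinf) : Prop :=
  ∀ f : ↥Hinf, ∀ z : ↥RHP, (T f).1 z = f.1 ⟨1 + z.1, mem_shift z⟩

/-!
Both operators are contractions: `L↓_β` is a composition operator, and the weight of `L↑_β`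
satisfies `|(1+z)^(-2β)| = |1+z|^(-2β) ≤ 1` because `|1+z| ≥ Re (1+z) > 1`. Hence `r ≤ 1`.
Conversely `1` lies in both spectra. `L↓_β` fixes the constant function `1`. For `L↑_β` the
orbit `L↑_β^n 1 = (1+nz)^(-2β)` stays in the unit ball, so if `1 - L↑_β` were invertible, the
telescoping identity `(1 - L↑_β) ∑_{n<N} L↑_β^n 1 = 1 - L↑_β^N 1` would bound the partial sums;
but their values at real `z → 0⁺` tend to `N`.
-/

open Filter Topology

namespace ContinuousLinearMap

variable {𝕜 E : Type*} [NontriviallyNormedField 𝕜] [NormedAddCommGroup E] [NormedSpace 𝕜 E]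

theorem mem_spectrum_of_apply_eq_smul {T : E →L[𝕜] E} {μ : 𝕜} {x : E} (hx : x ≠ 0)
    (hTx : T x = μ • x) : μ ∈ spectrum 𝕜 T := by
  rintro ⟨u, hu⟩
  have hux : (u : E →L[𝕜] E) x = 0 := by
    rw [hu, _root_.sub_apply, algebraMap_apply, hTx, sub_self]
  apply hx
  rw [← one_apply_eq_self (F := E →L[𝕜] E) x, ← u.inv_mul, mul_apply_eq_comp, hux, map_zero]

theorem norm_pow_apply_le_of_norm_le_one {T : E →L[𝕜] E} (hT : ‖T‖ ≤ 1) (x : E) :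
    ∀ n : ℕ, ‖(T ^ n) x‖ ≤ ‖x‖
  | 0 => by rw [pow_zero, one_apply_eq_self]
  | n + 1 => by
    rw [pow_succ', mul_apply_eq_comp]
    exact (le_of_opNorm_le T hT _).trans
      ((one_mul _).trans_le (norm_pow_apply_le_of_norm_le_one hT x n))

theorem one_mem_spectrum_of_tendsto_norm_sum_pow_apply {T : E →L[𝕜] E} {x : E} {C : ℝ}
    (horbit : ∀ n, ‖(T ^ n) x‖ ≤ C)
    (hsum : Tendsto (fun N ↦ ‖∑ n ∈ Finset.range N, (T ^ n) x‖) atTop atTop) :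
    (1 : 𝕜) ∈ spectrum 𝕜 T := by
  rintro ⟨u, hu⟩
  rw [map_one] at hu
  have hsum_eq (N : ℕ) :
      ∑ n ∈ Finset.range N, (T ^ n) x = (↑u⁻¹ : E →L[𝕜] E) (x - (T ^ N) x) := by
    rw [← _root_.sum_apply, ← one_mul (∑ n ∈ Finset.range N, T ^ n), ← u.inv_mul, mul_assoc, hu,
      mul_neg_geom_sum, mul_apply_eq_comp, _root_.sub_apply, one_apply_eq_self]
  obtain ⟨N, hN⟩ := (hsum.eventually_gt_atTop (‖(↑u⁻¹ : E →L[𝕜] E)‖ * (C + C))).exists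
  refine hN.not_ge ?_
  calc ‖∑ n ∈ Finset.range N, (T ^ n) x‖ = ‖(↑u⁻¹ : E →L[𝕜] E) (x - (T ^ N) x)‖ := by
        rw [hsum_eq]
    _ ≤ ‖(↑u⁻¹ : E →L[𝕜] E)‖ * ‖x - (T ^ N) x‖ := le_opNorm _ _
    _ ≤ ‖(↑u⁻¹ : E →L[𝕜] E)‖ * (C + C) := by
        gcongr
        refine (norm_sub_le _ _).trans (add_le_add ?_ (horbit N))
        simpa using horbit 0

theorem spectralRadius_eq_one [CompleteSpace E] [Nontrivial E] {T : E →L[𝕜] E}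
    (hnorm : ‖T‖ ≤ 1) (hmem : (1 : 𝕜) ∈ spectrum 𝕜 T) : spectralRadius 𝕜 T = 1 :=
  le_antisymm ((spectrum.spectralRadius_le_nnnorm T).trans (by exact_mod_cast hnorm))
    (by simpa [spectralRadius] using
      le_iSup₂ (f := fun k (_ : k ∈ spectrum 𝕜 T) ↦ (‖k‖₊ : ℝ≥0∞)) 1 hmem)

end ContinuousLinearMap

theorem isOpen_RHP : IsOpen RHP := isOpen_lt continuous_const continuous_re

theorem tendstoUniformlyOn_extFun {ι : Type*} {l : Filter ι} {F : ι → ↥RHP →ᵇ ℂ}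
    {f : ↥RHP →ᵇ ℂ} (hF : Tendsto F l (𝓝 f)) :
    TendstoUniformlyOn (fun i ↦ extFun (F i)) (extFun f) l RHP := by
  rw [tendstoUniformlyOn_iff_tendstoUniformly_comp_coe]
  convert BoundedContinuousFunction.tendsto_iff_tendstoUniformly.mp hF using 1
  · ext i z
    exact dif_pos z.2
  · ext z
    exact dif_pos z.2

theorem isClosed_Hinf : IsClosed (Hinf : Set (↥RHP →ᵇ ℂ)) := by
  refine isClosed_of_closure_subset fun f hf ↦ ?_
  have := mem_closure_iff_nhdsWithin_neBot.mp hf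
  exact (tendstoUniformlyOn_extFun (l := 𝓝[Hinf] f) (F := id)
    (tendsto_id.mono_left nhdsWithin_le_nhds)).tendstoLocallyUniformlyOn.differentiableOn
    self_mem_nhdsWithin isOpen_RHP

instance : CompleteSpace Hinf := isClosed_Hinf.completeSpace_coe

namespace Hinf

noncomputable def one : Hinf :=
  ⟨const RHP 1, (differentiableOn_const 1).congr fun _ hz ↦ dif_pos hz⟩

theorem norm_one : ‖one‖ = 1 := by
  have : Nonempty RHP := ⟨⟨1, by simp [RHP]⟩⟩
  exact (norm_const_eq (1 : ℂ)).trans (by simp)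

theorem one_ne_zero : one ≠ 0 :=
  norm_ne_zero_iff.mp (norm_one ▸ _root_.one_ne_zero)

instance : Nontrivial Hinf := ⟨⟨one, 0, one_ne_zero⟩⟩

theorem norm_apply_le (f : Hinf) (z : RHP) : ‖f.1 z‖ ≤ ‖f‖ := f.1.norm_coe_le_norm z

theorem opNorm_le_one_of_norm_apply_le {T : Hinf →L[ℂ] Hinf}
    (hT : ∀ f z, ‖(T f).1 z‖ ≤ ‖f‖) : ‖T‖ ≤ 1 :=
  T.opNorm_le_bound zero_le_one fun f ↦ by
    rw [one_mul]
    exact (BoundedContinuousFunction.norm_le (norm_nonneg f)).mpr (hT f)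

end Hinf

theorem norm_cpow_le_one_of_one_le_norm {w : ℂ} (hw : 1 ≤ ‖w‖) {s : ℝ} (hs : s ≤ 0) :
    ‖w ^ (s : ℂ)‖ ≤ 1 := by
  rw [norm_cpow_real]
  exact Real.rpow_le_one_of_one_le_of_nonpos hw hs

theorem one_le_norm_one_add (z : RHP) : 1 ≤ ‖1 + z.1‖ :=
  calc 1 ≤ (1 + z.1).re := by simpa using z.2.out.le
    _ ≤ ‖1 + z.1‖ := re_le_norm _

namespace IsLdn

variable {T : Hinf →L[ℂ] Hinf}

theorem norm_le_one (hT : IsLdn T) : ‖T‖ ≤ 1 :=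
  Hinf.opNorm_le_one_of_norm_apply_le fun f z ↦ (hT f z).symm ▸ Hinf.norm_apply_le f _

theorem one_mem_spectrum (hT : IsLdn T) : (1 : ℂ) ∈ spectrum ℂ T :=
  ContinuousLinearMap.mem_spectrum_of_apply_eq_smul Hinf.one_ne_zero <| by
    rw [one_smul]
    exact Subtype.ext <| BoundedContinuousFunction.ext fun z ↦ hT _ z

end IsLdn

namespace IsLup

variable {β : ℝ} {T : Hinf →L[ℂ] Hinf}

theorem norm_le_one (hβ : 0 ≤ β) (hT : IsLup β T) : ‖T‖ ≤ 1 := by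
  refine Hinf.opNorm_le_one_of_norm_apply_le fun f z ↦ ?_
  have hweight : ‖(1 + z.1) ^ (-(2 * (β : ℂ)))‖ ≤ 1 := by
    simpa using norm_cpow_le_one_of_one_le_norm (one_le_norm_one_add z) (s := -(2 * β))
      (by linarith)
  rw [hT, norm_mul]
  exact (mul_le_of_le_one_left (norm_nonneg _) hweight).trans (Hinf.norm_apply_le f _)

theorem pow_one_apply_ofReal (hT : IsLup β T) (n : ℕ) :
    ∀ {x : ℝ} (hx : 0 < x), ((T ^ n) Hinf.one).1 ⟨x, hx⟩ = ((1 + n * x) ^ (-(2 * β)) : ℝ) := by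
  induction n with
  | zero => intro x hx; simp [Hinf.one]
  | succ n ih =>
    intro x hx
    have hx1 : 0 < 1 + x := by linarith
    have hy : 0 < x / (1 + x) := div_pos hx hx1
    have hpt : (⟨x / (1 + x), mem_div ⟨x, hx⟩⟩ : RHP) = ⟨(x / (1 + x) : ℝ), hy⟩ := by
      ext1; push_cast; rfl
    rw [pow_succ', mul_apply_eq_comp, hT, hpt, ih hy, ← ofReal_one, ← ofReal_add,
      show -(2 * (β : ℂ)) = ((-(2 * β) : ℝ) : ℂ) by push_cast; ring,
      ← ofReal_cpow hx1.le, ← ofReal_mul, ← Real.mul_rpow hx1.le (by positivity)]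
    congr 2
    field_simp
    push_cast
    ring

theorem natCast_le_norm_sum_pow_one (hT : IsLup β T) (N : ℕ) :
    (N : ℝ) ≤ ‖∑ n ∈ Finset.range N, (T ^ n) Hinf.one‖ := by
  set S := ∑ n ∈ Finset.range N, (T ^ n) Hinf.one
  have hterm (n : ℕ) : Tendsto (fun x : ℝ ↦ (1 + n * x) ^ (-(2 * β))) (𝓝[>] 0) (𝓝 1) := by
    have : ContinuousAt (fun x : ℝ ↦ (1 + n * x) ^ (-(2 * β))) 0 :=
      (continuousAt_const.add (continuousAt_const.mul continuousAt_id)).rpow_const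
        (Or.inl (by simp))
    simpa using this.tendsto.mono_left nhdsWithin_le_nhds
  refine le_of_tendsto (by simpa using tendsto_finsetSum (Finset.range N) fun n _ ↦ hterm n) ?_
  filter_upwards [self_mem_nhdsWithin] with x (hx : 0 < x)
  have hS : S.1 ⟨x, hx⟩ = ((∑ n ∈ Finset.range N, (1 + n * x) ^ (-(2 * β)) : ℝ) : ℂ) := by
    simp only [S, Submodule.coe_sum, BoundedContinuousFunction.coe_sum, Finset.sum_apply,
      hT.pow_one_apply_ofReal, ofReal_sum]
  calc ∑ n ∈ Finset.range N, (1 + n * x) ^ (-(2 * β)) ≤ ‖S.1 ⟨x, hx⟩‖ := by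
        rw [hS, norm_real]
        exact Real.le_norm_self _
    _ ≤ ‖S‖ := Hinf.norm_apply_le S _

theorem one_mem_spectrum (hβ : 0 ≤ β) (hT : IsLup β T) : (1 : ℂ) ∈ spectrum ℂ T :=
  ContinuousLinearMap.one_mem_spectrum_of_tendsto_norm_sum_pow_apply
    (ContinuousLinearMap.norm_pow_apply_le_of_norm_le_one (hT.norm_le_one hβ) _)
    (tendsto_atTop_mono hT.natCast_le_norm_sum_pow_one tendsto_natCast_atTop_atTop)

end IsLup

/-- (Corollary): for real `β ≥ 0` the spectral radii of `L↓_β` and `L↑_β`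
on `H^∞(Π)` are both equal to `1`. -/
theorem spectral_radii_eq_one (β : ℝ) (hβ : 0 ≤ β)
    (Lup Ldn : ↥Hinf →L[ℂ] ↥Hinf) (hup : IsLup (β : ℂ) Lup) (hdn : IsLdn Ldn) :
    spectralRadius ℂ Ldn = 1 ∧ spectralRadius ℂ Lup = 1 :=
  ⟨ContinuousLinearMap.spectralRadius_eq_one hdn.norm_le_one hdn.one_mem_spectrum,
    ContinuousLinearMap.spectralRadius_eq_one (hup.norm_le_one hβ) (hup.one_mem_spectrum hβ)⟩
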